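/- There exists a constant C ∈ (0, ∞) such that for every integer N ≥ 2, every τ ∈ (0, 1), and every t > 0, one has Σ_{j=1}^{N−1} ∫_0^t (e^{−λ_j^N (t−s)} − e^{−λ_j^N (t − ℓ_τ(s))})² ds ≤ C √τ, where λ_j^N = 4N² sin²(jπ/(2N)). -/

import Mathlib

/-!
Write `t - ℓ_τ(s) = (t - s) + d` with `0 ≤ d ≤ τ`. Then the `j`-th integrand is
`e^{-2λ(t-s)} (1 - e^{-λd})² ≤ min(1, λτ) e^{-2λ(t-s)}`, so the `j`-th integral is at most
`min(τ/2, 1/(2λ))`. Jordan's inequality `sin x ≥ 2x/π` gives `λ_j^N ≥ 4j²`, and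
`Σ_j min(τ, j⁻²) ≤ 3√τ` by splitting the sum at `j ≈ τ^{-1/2}`.
-/

/-- For a step size `τ > 0`, `ℓ_τ (s) = τ ⌊s/τ⌋` is the left endpoint of the grid
interval of size `τ` containing `s ≥ 0`. -/
noncomputable def leftGrid (τ s : ℝ) : ℝ := τ * ⌊s / τ⌋₊

open Real Finset MeasureTheory

lemma leftGrid_le {τ s : ℝ} (hτ : 0 < τ) (hs : 0 ≤ s) : leftGrid τ s ≤ s := by
  have h := Nat.floor_le (div_nonneg hs hτ.le)
  rw [le_div_iff₀ hτ] at h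
  rw [leftGrid]
  linarith

lemma sub_leftGrid_le {τ s : ℝ} (hτ : 0 < τ) : s - leftGrid τ s ≤ τ := by
  have h := Nat.lt_floor_add_one (s / τ)
  rw [div_lt_iff₀ hτ] at h
  rw [leftGrid]
  linarith

lemma sq_one_sub_exp_neg_le {x : ℝ} (hx : 0 ≤ x) : (1 - exp (-x)) ^ 2 ≤ min 1 x := by
  have h0 : 0 ≤ 1 - exp (-x) := by simpa using exp_le_one_iff.2 (neg_nonpos.2 hx)
  have h1 : 1 - exp (-x) ≤ 1 := by linarith [exp_pos (-x)]
  have hx' : 1 - exp (-x) ≤ x := by linarith [add_one_le_exp (-x)]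
  calc (1 - exp (-x)) ^ 2 ≤ 1 - exp (-x) := by nlinarith
    _ ≤ min 1 x := le_min h1 hx'

lemma sq_exp_neg_mul_sub_exp_neg_mul_le {c a b τ : ℝ} (hc : 0 ≤ c) (hab : a ≤ b) (hb : b ≤ a + τ) :
    (exp (-c * a) - exp (-c * b)) ^ 2 ≤ min 1 (c * τ) * exp (-(2 * c) * a) := by
  have hsplit : exp (-c * b) = exp (-c * a) * exp (-(c * (b - a))) := by
    rw [← exp_add]; ring_nf
  have hsq : exp (-(2 * c) * a) = exp (-c * a) ^ 2 := by
    rw [← exp_nat_mul]; ring_nf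
  have hgap : min 1 (c * (b - a)) ≤ min 1 (c * τ) :=
    min_le_min_left _ (mul_le_mul_of_nonneg_left (by linarith) hc)
  calc (exp (-c * a) - exp (-c * b)) ^ 2
      = exp (-c * a) ^ 2 * (1 - exp (-(c * (b - a)))) ^ 2 := by rw [hsplit]; ring
    _ ≤ exp (-c * a) ^ 2 * min 1 (c * τ) := by
      gcongr
      exact (sq_one_sub_exp_neg_le (mul_nonneg hc (sub_nonneg.2 hab))).trans hgap
    _ = min 1 (c * τ) * exp (-(2 * c) * a) := by rw [hsq, mul_comm]

lemma integral_exp_neg_mul_sub_le {c : ℝ} (hc : 0 < c) (t : ℝ) :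
    ∫ s in (0 : ℝ)..t, exp (-c * (t - s)) ≤ 1 / c := by
  have h : ∫ s in (0 : ℝ)..t, exp (-c * (t - s)) = (1 - exp (-c * t)) / c := by
    simp_rw [show ∀ s, -c * (t - s) = c * s + -c * t by intro s; ring]
    rw [intervalIntegral.integral_comp_mul_add _ hc.ne', integral_exp]
    simp [div_eq_inv_mul, neg_mul]
  rw [h]
  gcongr
  linarith [exp_pos (-c * t)]

lemma integral_sq_exp_sub_exp_leftGrid_le {c τ t : ℝ} (hc : 0 < c) (hτ : 0 < τ) (ht : 0 ≤ t) :
    ∫ s in (0 : ℝ)..t, (exp (-c * (t - s)) - exp (-c * (t - leftGrid τ s))) ^ 2 ≤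
      min (τ / 2) (1 / (2 * c)) := by
  have hdom : ∀ s ∈ Set.Ioc 0 t, (exp (-c * (t - s)) - exp (-c * (t - leftGrid τ s))) ^ 2 ≤
      min 1 (c * τ) * exp (-(2 * c) * (t - s)) := fun s hs =>
    sq_exp_neg_mul_sub_exp_neg_mul_le hc.le (by linarith [leftGrid_le hτ hs.1.le])
      (by linarith [sub_leftGrid_le (s := s) hτ])
  have hint : IntegrableOn (fun s => min 1 (c * τ) * exp (-(2 * c) * (t - s))) (Set.Ioc 0 t) :=
    (Continuous.integrableOn_Ioc (by fun_prop))
  calc ∫ s in (0 : ℝ)..t, (exp (-c * (t - s)) - exp (-c * (t - leftGrid τ s))) ^ 2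
      ≤ ∫ s in (0 : ℝ)..t, min 1 (c * τ) * exp (-(2 * c) * (t - s)) := by
        rw [intervalIntegral.integral_of_le ht, intervalIntegral.integral_of_le ht]
        refine integral_mono_of_nonneg (.of_forall fun s => sq_nonneg _) hint ?_
        filter_upwards [ae_restrict_mem measurableSet_Ioc] with s hs using hdom s hs
    _ ≤ min 1 (c * τ) * (1 / (2 * c)) := by
        rw [intervalIntegral.integral_const_mul]
        gcongr
        exact integral_exp_neg_mul_sub_le (by positivity) t
    _ = min (τ / 2) (1 / (2 * c)) := by
        rw [min_mul_of_nonneg _ _ (by positivity), one_mul, min_comm]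
        field_simp

/-- `λ_j^N`, the eigenvalues of the discrete Dirichlet Laplacian with mesh `1/N`. -/
noncomputable def dirichletEigenvalue (N j : ℕ) : ℝ :=
  4 * (N : ℝ) ^ 2 * sin ((j : ℝ) * π / (2 * N)) ^ 2

lemma four_mul_sq_le_dirichletEigenvalue {N j : ℕ} (hj : j ≤ N) :
    4 * (j : ℝ) ^ 2 ≤ dirichletEigenvalue N j := by
  rcases Nat.eq_zero_or_pos j with rfl | hj0
  · simp [dirichletEigenvalue]
  have hN : (0 : ℝ) < N := by exact_mod_cast hj0.trans_le hj
  have hjN : (j : ℝ) ≤ N := by exact_mod_cast hj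
  have hx : (j : ℝ) * π / (2 * N) ≤ π / 2 := by
    rw [div_le_div_iff₀ (by positivity) two_pos]; nlinarith [pi_pos]
  have hsin := mul_le_sin (by positivity) hx
  rw [show 2 / π * ((j : ℝ) * π / (2 * N)) = j / N by field_simp] at hsin
  calc 4 * (j : ℝ) ^ 2 = 4 * N ^ 2 * (j / N) ^ 2 := by field_simp
    _ ≤ dirichletEigenvalue N j := by
      unfold dirichletEigenvalue; gcongr

lemma sum_min_inv_sq_le {τ : ℝ} (hτ : 0 < τ) (n : ℕ) :
    ∑ j ∈ Icc 1 n, min τ ((j : ℝ) ^ 2)⁻¹ ≤ 3 * √τ := by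
  set K := ⌊(√τ)⁻¹⌋₊
  have hs : 0 < √τ := sqrt_pos.2 hτ
  have hKle : (K : ℝ) ≤ (√τ)⁻¹ := Nat.floor_le (by positivity)
  have hKlt : (√τ)⁻¹ < K + 1 := Nat.lt_floor_add_one _
  have hhead : ∑ j ∈ (Icc 1 n).filter (· ≤ K), min τ ((j : ℝ) ^ 2)⁻¹ ≤ √τ :=
    calc ∑ j ∈ (Icc 1 n).filter (· ≤ K), min τ ((j : ℝ) ^ 2)⁻¹
        ≤ ∑ j ∈ Icc 1 K, min τ ((j : ℝ) ^ 2)⁻¹ :=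
          sum_le_sum_of_subset_of_nonneg (fun j hj => by simp at hj ⊢; omega)
            (fun _ _ _ => by positivity)
      _ ≤ ∑ _j ∈ Icc 1 K, τ := sum_le_sum fun _ _ => min_le_left _ _
      _ = K * τ := by simp
      _ ≤ (√τ)⁻¹ * τ := by gcongr
      _ = √τ := by rw [inv_mul_eq_div, div_eq_iff hs.ne', mul_self_sqrt hτ.le]
  have htail : ∑ j ∈ (Icc 1 n).filter (¬ · ≤ K), min τ ((j : ℝ) ^ 2)⁻¹ ≤ 2 * √τ :=
    calc ∑ j ∈ (Icc 1 n).filter (¬ · ≤ K), min τ ((j : ℝ) ^ 2)⁻¹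
        ≤ ∑ j ∈ Ioo K (n + 1), ((j : ℝ) ^ 2)⁻¹ :=
          (sum_le_sum fun _ _ => min_le_right _ _).trans <|
            sum_le_sum_of_subset_of_nonneg (fun j hj => by simp at hj ⊢; omega)
              (fun _ _ _ => by positivity)
      _ ≤ 2 / (K + 1) := sum_Ioo_inv_sq_le K (n + 1)
      _ ≤ 2 * √τ := by
          rw [div_le_iff₀ (by positivity)]
          nlinarith [mul_inv_cancel₀ hs.ne']
  rw [← sum_filter_add_sum_filter_not _ (· ≤ K)]
  linarith

lemma integral_sq_exp_sub_exp_leftGrid_dirichletEigenvalue_le {N j : ℕ} (hj : 1 ≤ j)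
    (hjN : j ≤ N) {τ t : ℝ} (hτ : 0 < τ) (ht : 0 ≤ t) :
    ∫ s in (0 : ℝ)..t, (exp (-dirichletEigenvalue N j * (t - s)) -
        exp (-dirichletEigenvalue N j * (t - leftGrid τ s))) ^ 2 ≤ min τ ((j : ℝ) ^ 2)⁻¹ / 2 := by
  have hj0 : (0 : ℝ) < j := by exact_mod_cast hj
  have hev := four_mul_sq_le_dirichletEigenvalue hjN
  have hev_pos : 0 < dirichletEigenvalue N j := by linarith [pow_pos hj0 2]
  refine (integral_sq_exp_sub_exp_leftGrid_le hev_pos hτ ht).trans ?_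
  rw [← min_div_div_right zero_le_two]
  refine min_le_min_left _ ?_
  rw [div_le_div_iff₀ (by positivity) two_pos]
  field_simp
  linarith

/-- There exists a constant `C ∈ (0, ∞)` such that for every integer
`N ≥ 2`, every `τ ∈ (0, 1)` and every `t > 0`, one has
`Σ_{j=1}^{N-1} ∫_0^t (e^{-λ_j^N (t-s)} - e^{-λ_j^N (t - ℓ_τ(s))})² ds ≤ C √τ`,
where `λ_j^N = 4N² sin² (jπ/(2N))`. -/
theorem sum_integral_exp_diff_bound :
    ∃ C : ℝ, 0 < C ∧
      ∀ (N : ℕ), 2 ≤ N → ∀ τ : ℝ, 0 < τ → τ < 1 → ∀ t : ℝ, 0 < t →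
        ∑ j ∈ Finset.Icc 1 (N - 1),
            ∫ s in (0:ℝ)..t,
              (Real.exp (-(4 * (N : ℝ) ^ 2 * Real.sin ((j : ℝ) * Real.pi / (2 * N)) ^ 2) *
                    (t - s)) -
                  Real.exp (-(4 * (N : ℝ) ^ 2 *
                      Real.sin ((j : ℝ) * Real.pi / (2 * N)) ^ 2) *
                    (t - leftGrid τ s))) ^ 2 ≤
          C * Real.sqrt τ := by
  refine ⟨3 / 2, by norm_num, fun N _ τ hτ _ t ht => ?_⟩
  calc _ ≤ ∑ j ∈ Icc 1 (N - 1), min τ ((j : ℝ) ^ 2)⁻¹ / 2 := sum_le_sum fun j hj =>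
        integral_sq_exp_sub_exp_leftGrid_dirichletEigenvalue_le (mem_Icc.1 hj).1
          ((mem_Icc.1 hj).2.trans (Nat.sub_le N 1)) hτ ht.le
    _ ≤ 3 * √τ / 2 := by rw [← sum_div]; gcongr; exact sum_min_inv_sq_le hτ _
    _ = 3 / 2 * √τ := by ring
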